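/- arXiv:1009.5689 — 6 statements merged into one kernel-verified Lean document; each statement's English description precedes it below -/
import Mathlib

section
/- Suppose Q̂(β₀) > 0, κ_c̄ > 0, and λ ≥ c·n·‖S̃‖_∞ with c > 1 (so that δ̂ = β̂ − β₀ lies in Δ_c̄ when δ̂ ≠ 0). Then any square-root lasso solution β̂ satisfies √(Q̂(β̂)) ≤ √(Q̂(β₀)) + (λ/n) · (√s · ‖β̂ − β₀‖_{2,n} / κ_c̄). (Inequality (Eq:boundQ) from the proof of Theorem 1.) -/
open Finset

/-!
Convexity of `β ↦ √Q̂(β)` gives, at `β₀` where the residual is `σ ε`, the subgradient bound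
`√Q̂(β̂) ≥ √Q̂(β₀) - S̃'δ̂ ≥ √Q̂(β₀) - ‖S̃‖_∞ ‖δ̂‖₁`, while optimality of `β̂` against `β₀` (supported on
`T`) gives `√Q̂(β̂) ≤ √Q̂(β₀) + (λ/n)(‖δ̂_T‖₁ - ‖δ̂_{Tᶜ}‖₁)`. With `λ/n ≥ c‖S̃‖_∞` the two bounds force
`δ̂` into the cone `Δ_c̄`, where `κ_c̄` bounds `‖δ̂_T‖₁` by `√s ‖δ̂‖_{2,n} / κ_c̄`; dropping the
nonpositive `-‖δ̂_{Tᶜ}‖₁` from the upper bound gives the claim.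
-/

open Matrix

namespace SqrtLasso

variable {n : ℕ}

noncomputable def empInner (u v : Fin n → ℝ) : ℝ := (n : ℝ)⁻¹ * (u ⬝ᵥ v)

/-- `√𝔼ₙ[v²]`, phrased so that `√Q̂`, `‖·‖_{2,n}` and the denominator of `S̃` unfold to it. -/
noncomputable def empNorm (v : Fin n → ℝ) : ℝ := √((n : ℝ)⁻¹ * ∑ i, v i ^ 2)

lemma empNorm_nonneg (v : Fin n → ℝ) : 0 ≤ empNorm v := Real.sqrt_nonneg _

lemma empInner_self (v : Fin n → ℝ) : empInner v v = empNorm v ^ 2 := by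
  rw [empNorm, Real.sq_sqrt (by positivity), empInner]
  simp only [dotProduct, sq]

lemma empInner_sub_right (u v w : Fin n → ℝ) :
    empInner u (v - w) = empInner u v - empInner u w := by
  simp only [empInner, dotProduct_sub, mul_sub]

lemma empInner_smul_left (a : ℝ) (u v : Fin n → ℝ) : empInner (a • u) v = a * empInner u v := by
  simp only [empInner, smul_dotProduct, smul_eq_mul]
  ring

lemma empNorm_smul {a : ℝ} (ha : 0 ≤ a) (v : Fin n → ℝ) : empNorm (a • v) = a * empNorm v := by
  simp only [empNorm, Pi.smul_apply, smul_eq_mul, mul_pow, ← mul_sum, mul_left_comm _ (a ^ 2)]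
  rw [Real.sqrt_mul (sq_nonneg a), Real.sqrt_sq ha]

lemma empInner_le_empNorm_mul_empNorm (u v : Fin n → ℝ) : empInner u v ≤ empNorm u * empNorm v := by
  have hn : (0 : ℝ) ≤ (n : ℝ)⁻¹ := by positivity
  calc empInner u v = (n : ℝ)⁻¹ * ∑ i, u i * v i := rfl
    _ ≤ (n : ℝ)⁻¹ * (√(∑ i, u i ^ 2) * √(∑ i, v i ^ 2)) :=
      mul_le_mul_of_nonneg_left (Real.sum_mul_le_sqrt_mul_sqrt _ _ _) hn
    _ = empNorm u * empNorm v := by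
      rw [empNorm, empNorm, Real.sqrt_mul hn, Real.sqrt_mul hn]
      linear_combination (√(∑ i, u i ^ 2) * √(∑ i, v i ^ 2)) * (Real.mul_self_sqrt hn).symm

/-- The tangent bound `‖a - d‖ ≥ ‖a‖ - ⟨a, d⟩/‖a‖` for the convex function `‖·‖`; at `a = 0` the
junk value `0 / 0 = 0` keeps it true. -/
lemma empNorm_sub_empInner_div_le_empNorm_sub (a d : Fin n → ℝ) :
    empNorm a - empInner a d / empNorm a ≤ empNorm (a - d) := by
  rcases (empNorm_nonneg a).eq_or_lt with h | h
  · rw [← h, div_zero, sub_zero]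
    exact empNorm_nonneg _
  · calc empNorm a - empInner a d / empNorm a = empInner a (a - d) / empNorm a := by
          rw [empInner_sub_right, empInner_self]
          field_simp
      _ ≤ empNorm a * empNorm (a - d) / empNorm a := by
          gcongr
          exact empInner_le_empNorm_mul_empNorm _ _
      _ = empNorm (a - d) := by field_simp

lemma sum_empInner_col_mul_eq {p : ℕ} (x : Matrix (Fin n) (Fin p) ℝ) (ε : Fin n → ℝ)
    (δ : Fin p → ℝ) : ∑ j, empInner (fun i => x i j) ε * δ j = empInner ε (x *ᵥ δ) := by
  simp only [empInner, dotProduct, mulVec, mul_sum, sum_mul]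
  rw [sum_comm]
  exact sum_congr rfl fun i _ => sum_congr rfl fun j _ => by ring

/-- At a point with residual `σ ε` the gradient of `β ↦ √Q̂(β)` is `-S̃`: the scale `σ > 0` cancels. -/
lemma empNorm_sub_sum_score_mul_le {p : ℕ} {σ : ℝ} (hσ : 0 < σ) (x : Matrix (Fin n) (Fin p) ℝ)
    {y ε : Fin n → ℝ} {β₀ : Fin p → ℝ} (hy : y = x *ᵥ β₀ + σ • ε) (β : Fin p → ℝ) :
    empNorm (y - x *ᵥ β₀) - ∑ j, empInner (fun i => x i j) ε / empNorm ε * (β j - β₀ j) ≤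
      empNorm (y - x *ᵥ β) := by
  have hres : y - x *ᵥ β = σ • ε - x *ᵥ (β - β₀) := by
    rw [hy, mulVec_sub]
    abel
  have hscore : ∑ j, empInner (fun i => x i j) ε / empNorm ε * (β j - β₀ j) =
      empInner (σ • ε) (x *ᵥ (β - β₀)) / empNorm (σ • ε) := by
    simp only [div_mul_eq_mul_div, ← sum_div, ← Pi.sub_apply β β₀, sum_empInner_col_mul_eq,
      empInner_smul_left, empNorm_smul hσ.le, mul_div_mul_left _ _ hσ.ne']
  rw [hscore, hres, hy, add_sub_cancel_left]
  exact empNorm_sub_empInner_div_le_empNorm_sub _ _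

end SqrtLasso

lemma sum_abs_sub_sum_abs_le_of_support {ι : Type*} [Fintype ι] [DecidableEq ι] (T : Finset ι)
    {β₀ : ι → ℝ} (hβ₀ : ∀ j ∉ T, β₀ j = 0) (β : ι → ℝ) :
    ∑ j, |β₀ j| - ∑ j, |β j| ≤ ∑ j ∈ T, |β j - β₀ j| - ∑ j ∈ Tᶜ, |β j - β₀ j| := by
  have hon : ∑ j ∈ T, |β₀ j| - ∑ j ∈ T, |β j| ≤ ∑ j ∈ T, |β j - β₀ j| := by
    rw [← sum_sub_distrib]
    exact sum_le_sum fun j _ => abs_sub_comm (β j) (β₀ j) ▸ abs_sub_abs_le_abs_sub _ _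
  have hoff₀ : ∑ j ∈ Tᶜ, |β₀ j| = 0 :=
    sum_eq_zero fun j hj => by rw [hβ₀ j (mem_compl.1 hj), abs_zero]
  have hoff : ∑ j ∈ Tᶜ, |β j - β₀ j| = ∑ j ∈ Tᶜ, |β j| :=
    sum_congr rfl fun j hj => by rw [hβ₀ j (mem_compl.1 hj), sub_zero]
  rw [← sum_add_sum_compl T, ← sum_add_sum_compl T fun j => |β j|, hoff₀, hoff]
  linarith

lemma le_add_mul_sum_abs_sub_of_add_mul_sum_abs_le {ι : Type*} [Fintype ι] [DecidableEq ι]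
    {f : (ι → ℝ) → ℝ} {t : ℝ} (ht : 0 ≤ t) (T : Finset ι) {β₀ β : ι → ℝ}
    (hβ₀ : ∀ j ∉ T, β₀ j = 0) (hopt : f β + t * ∑ j, |β j| ≤ f β₀ + t * ∑ j, |β₀ j|) :
    f β ≤ f β₀ + t * (∑ j ∈ T, |β j - β₀ j| - ∑ j ∈ Tᶜ, |β j - β₀ j|) := by
  nlinarith [mul_le_mul_of_nonneg_left (sum_abs_sub_sum_abs_le_of_support T hβ₀ β) ht]

lemma sum_mul_le_sup'_abs_mul_sum_abs {ι : Type*} [Fintype ι] (hι : (univ : Finset ι).Nonempty)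
    (S δ : ι → ℝ) : ∑ j, S j * δ j ≤ univ.sup' hι (fun j => |S j|) * ∑ j, |δ j| := by
  rw [mul_sum]
  refine sum_le_sum fun j hj => ?_
  calc S j * δ j ≤ |S j| * |δ j| := abs_mul (S j) (δ j) ▸ le_abs_self _
    _ ≤ _ := by gcongr; exact le_sup' (fun j => |S j|) hj

/-- The two-sided bound on `√Q̂(β̂)`, with `a = ‖δ_T‖₁`, `b = ‖δ_{Tᶜ}‖₁`, `M = ‖S̃‖_∞` and `t = λ/n`,
places `δ` in the cone `Δ_c̄`. -/
lemma le_add_one_div_sub_one_mul_of_bounds {q q₀ t M a b c : ℝ} (hc : 1 < c) (hMt : c * M ≤ t)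
    (ht : 0 < t) (ha : 0 ≤ a) (hb : 0 ≤ b) (hup : q ≤ q₀ + t * (a - b))
    (hlow : q₀ - M * (a + b) ≤ q) : b ≤ (c + 1) / (c - 1) * a := by
  have hct : c * (t * (b - a)) ≤ t * (a + b) := by
    nlinarith [mul_le_mul_of_nonneg_right hMt (add_nonneg ha hb)]
  rw [div_mul_eq_mul_div, le_div_iff₀ (by linarith)]
  nlinarith

lemma le_add_mul_of_bounds {q q₀ t M a b c r : ℝ} (hc : 1 < c) (hM : 0 ≤ M) (hMt : c * M ≤ t)
    (ha : 0 ≤ a) (hb : 0 ≤ b) (hup : q ≤ q₀ + t * (a - b)) (hlow : q₀ - M * (a + b) ≤ q)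
    (hRE : b ≤ (c + 1) / (c - 1) * a → a ≤ r) : q ≤ q₀ + t * r := by
  rcases (show 0 ≤ t by nlinarith).eq_or_lt with rfl | ht
  · simpa using hup
  · have har := hRE (le_add_one_div_sub_one_mul_of_bounds hc hMt ht ha hb hup hlow)
    nlinarith

open SqrtLasso in
theorem sqrt_lasso_Qhat_bound_general
    (n p : ℕ) (hn : 0 < n) (hp : 0 < p)
    (x : Fin n → Fin p → ℝ) (ε : Fin n → ℝ) (β₀ : Fin p → ℝ) (σ : ℝ) (hσ : 0 < σ)
    (y : Fin n → ℝ) (hy : ∀ i, y i = (∑ j, x i j * β₀ j) + σ * ε i)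
    (T : Finset (Fin p)) (hT : ∀ j, j ∈ T ↔ β₀ j ≠ 0)
    (s : ℕ)
    (Q : (Fin p → ℝ) → ℝ)
    (hQ : ∀ β, Q β = (n : ℝ)⁻¹ * ∑ i, (y i - ∑ j, x i j * β j) ^ 2)
    (pnorm : (Fin p → ℝ) → ℝ)
    (hpnorm : ∀ δ : Fin p → ℝ,
      pnorm δ = Real.sqrt ((n : ℝ)⁻¹ * ∑ i, (∑ j, x i j * δ j) ^ 2))
    (S : Fin p → ℝ)
    (hS : ∀ j, S j = ((n : ℝ)⁻¹ * ∑ i, x i j * ε i) /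
      Real.sqrt ((n : ℝ)⁻¹ * ∑ i, (ε i) ^ 2))
    (c cbar κ lam : ℝ) (hc : 1 < c) (hcbar : cbar = (c + 1) / (c - 1))
    (hκpos : 0 < κ)
    (hκ : ∀ δ : Fin p → ℝ, δ ≠ 0 → (∑ j ∈ Tᶜ, |δ j|) ≤ cbar * ∑ j ∈ T, |δ j| →
      κ * (∑ j ∈ T, |δ j|) ≤ Real.sqrt s * pnorm δ)
    (hlam : c * ((n : ℝ) * Finset.univ.sup' ⟨⟨0, hp⟩, Finset.mem_univ _⟩
      (fun j => |S j|)) ≤ lam)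
    (βh : Fin p → ℝ)
    (hopt : ∀ β : Fin p → ℝ,
      Real.sqrt (Q βh) + (lam / n) * ∑ j, |βh j| ≤
      Real.sqrt (Q β) + (lam / n) * ∑ j, |β j|) :
    Real.sqrt (Q βh) ≤ Real.sqrt (Q β₀) +
      (lam / n) * (Real.sqrt s * pnorm (fun j => βh j - β₀ j) / κ) := by
  set δ : Fin p → ℝ := fun j => βh j - β₀ j
  set M := univ.sup' ⟨⟨0, hp⟩, mem_univ _⟩ fun j => |S j|
  let X : Matrix (Fin n) (Fin p) ℝ := Matrix.of x
  have hS' : ∀ j, S j = empInner (fun i => X i j) ε / empNorm ε := hS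
  have hsqrtQ : ∀ β, √(Q β) = empNorm (y - X *ᵥ β) := fun β => by rw [hQ]; rfl
  have hmodel : y = X *ᵥ β₀ + σ • ε := funext fun i => by simp [X, hy, mulVec, dotProduct]
  have hM : 0 ≤ M := (abs_nonneg _).trans (le_sup' (fun j => |S j|) (mem_univ ⟨0, hp⟩))
  have hMt : c * M ≤ lam / n := by
    rw [le_div_iff₀ (by exact_mod_cast hn)]; linarith
  have ht : 0 ≤ lam / n := (mul_nonneg (by linarith) hM).trans hMt
  have hlow : √(Q β₀) - M * ∑ j, |δ j| ≤ √(Q βh) :=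
    calc √(Q β₀) - M * ∑ j, |δ j| ≤ √(Q β₀) - ∑ j, S j * δ j := by
          gcongr; exact sum_mul_le_sup'_abs_mul_sum_abs _ S δ
      _ ≤ √(Q βh) := by
          simp only [hsqrtQ, hS']
          exact empNorm_sub_sum_score_mul_le hσ X hmodel βh
  have hup : √(Q βh) ≤ √(Q β₀) + lam / n * (∑ j ∈ T, |δ j| - ∑ j ∈ Tᶜ, |δ j|) :=
    le_add_mul_sum_abs_sub_of_add_mul_sum_abs_le (f := fun β => √(Q β)) ht T
      (fun j hj => not_not.1 (mt (hT j).2 hj)) (hopt β₀)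
  refine le_add_mul_of_bounds hc hM hMt (sum_nonneg fun _ _ => abs_nonneg _)
    (sum_nonneg fun _ _ => abs_nonneg _) hup (by rwa [← sum_add_sum_compl T] at hlow) ?_
  intro hcone
  rw [le_div_iff₀ hκpos, mul_comm]
  by_cases hδ : δ = 0
  · simp only [hδ, Pi.zero_apply, abs_zero, sum_const_zero, mul_zero, hpnorm]
    positivity
  · exact hκ δ hδ (hcbar ▸ hcone)

/-- Inequality (Eq:boundQ) from the proof of Theorem 1:
`√Q̂(β̂) ≤ √Q̂(β₀) + (λ/n)·√s·‖β̂ - β₀‖_{2,n}/κ_c̄`. -/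
theorem sqrt_lasso_Qhat_bound
    (n p : ℕ) (hn : 0 < n) (hp : 0 < p)
    (x : Fin n → Fin p → ℝ) (ε : Fin n → ℝ) (β₀ : Fin p → ℝ) (σ : ℝ) (hσ : 0 < σ)
    (y : Fin n → ℝ) (hy : ∀ i, y i = (∑ j, x i j * β₀ j) + σ * ε i)
    (T : Finset (Fin p)) (hT : ∀ j, j ∈ T ↔ β₀ j ≠ 0)
    (s : ℕ) (hs : s = T.card) (hs1 : 1 ≤ s)
    (Q : (Fin p → ℝ) → ℝ)
    (hQ : ∀ β, Q β = (n : ℝ)⁻¹ * ∑ i, (y i - ∑ j, x i j * β j) ^ 2)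
    (hQ0 : 0 < Q β₀)
    (pnorm : (Fin p → ℝ) → ℝ)
    (hpnorm : ∀ δ : Fin p → ℝ,
      pnorm δ = Real.sqrt ((n : ℝ)⁻¹ * ∑ i, (∑ j, x i j * δ j) ^ 2))
    (S : Fin p → ℝ)
    (hS : ∀ j, S j = ((n : ℝ)⁻¹ * ∑ i, x i j * ε i) /
      Real.sqrt ((n : ℝ)⁻¹ * ∑ i, (ε i) ^ 2))
    (c cbar κ lam : ℝ) (hc : 1 < c) (hcbar : cbar = (c + 1) / (c - 1))
    (hκpos : 0 < κ)
    (hκ : ∀ δ : Fin p → ℝ, δ ≠ 0 → (∑ j ∈ Tᶜ, |δ j|) ≤ cbar * ∑ j ∈ T, |δ j| →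
      κ * (∑ j ∈ T, |δ j|) ≤ Real.sqrt s * pnorm δ)
    (hlam : c * ((n : ℝ) * Finset.univ.sup' ⟨⟨0, hp⟩, Finset.mem_univ _⟩
      (fun j => |S j|)) ≤ lam)
    (βh : Fin p → ℝ)
    (hopt : ∀ β : Fin p → ℝ,
      Real.sqrt (Q βh) + (lam / n) * ∑ j, |βh j| ≤
      Real.sqrt (Q β) + (lam / n) * ∑ j, |β j|) :
    Real.sqrt (Q βh) ≤ Real.sqrt (Q β₀) +
      (lam / n) * (Real.sqrt s * pnorm (fun j => βh j - β₀ j) / κ) :=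
  sqrt_lasso_Qhat_bound_general n p hn hp x ε β₀ σ hσ y hy T hT s Q hQ pnorm hpnorm S hS c cbar κ
    lam hc hcbar hκpos hκ hlam βh hopt
end

section
/- Suppose Q̂(β₀) > 0, κ_c̄ > 0, and λ ≥ c·n·‖S̃‖_∞ with c > 1. Then any square-root lasso solution β̂ with δ̂ = β̂ − β₀ satisfies ‖δ̂‖²_{2,n} ≤ 2√(Q̂(β₀))·‖S̃‖_∞·‖δ̂‖₁ + [√(Q̂(β̂)) + √(Q̂(β₀))]·(λ/n)·(√s·‖δ̂‖_{2,n}/κ_c̄ − ‖δ̂_{Tᶜ}‖₁). (The master inequality (Eq:Id) from the proof of Theorem 1.) -/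
open Finset

/-!
Write `δ = β̂ - β₀`, `q₀ = √Q̂(β₀)`, `q = √Q̂(β̂)` and `a = ⟨δ, S̃⟩`. Since `S̃` is scale free,
`q₀ a = (1/n) Σᵢ σ εᵢ xᵢ'δ`, and expanding the square in `Q̂(β̂)` gives
`‖δ‖²_{2,n} = q² - q₀² + 2 q₀ a = (q + q₀)(q - q₀) + 2 q₀ a`, while Cauchy–Schwarz gives
`q ≥ q₀ - a`. Hölder bounds `a ≤ ‖S̃‖_∞ ‖δ‖₁`, and comparing `β̂` with the competitor `β₀`,
which vanishes off `T`, bounds `q - q₀ ≤ (λ/n)(‖δ_T‖₁ - ‖δ_{Tᶜ}‖₁)`. The two bounds on `q - q₀`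
together with `λ ≥ c n ‖S̃‖_∞` put `δ` in the cone `Δ_c̄`, where `‖δ_T‖₁ ≤ √s ‖δ‖_{2,n} / κ_c̄`.
-/

section BasicInequalities

variable {q₀ q d a M L A B c κ R : ℝ}

theorem le_div_mul_of_basic_inequalities (hL : 0 < L) (hc : 1 < c) (hAB : 0 ≤ A + B)
    (hlow : q₀ - a ≤ q) (ha : a ≤ M * (A + B)) (hup : q - q₀ ≤ L * (A - B))
    (hML : c * M ≤ L) : B ≤ (c + 1) / (c - 1) * A := by
  have hca : c * a ≤ L * (A + B) := calc
    c * a ≤ c * (M * (A + B)) := mul_le_mul_of_nonneg_left ha (by linarith)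
    _ = c * M * (A + B) := by ring
    _ ≤ L * (A + B) := mul_le_mul_of_nonneg_right hML hAB
  have hcneg : c * -a ≤ c * (L * (A - B)) :=
    mul_le_mul_of_nonneg_left (by linarith) (by linarith)
  have hcone : L * ((c - 1) * B) ≤ L * ((c + 1) * A) := by linarith
  rw [div_mul_eq_mul_div, le_div_iff₀ (by linarith)]
  linarith [le_of_mul_le_mul_left hcone hL]

theorem master_inequality_of_basic_inequalities (hq₀ : 0 ≤ q₀) (hq : 0 ≤ q) (hM : 0 ≤ M)
    (hA : 0 ≤ A) (hB : 0 ≤ B) (hc : 1 < c) (hκ : 0 < κ)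
    (hd : d ^ 2 = q ^ 2 - q₀ ^ 2 + 2 * q₀ * a) (hlow : q₀ - a ≤ q) (ha : a ≤ M * (A + B))
    (hup : q - q₀ ≤ L * (A - B)) (hML : c * M ≤ L)
    (hRE : B ≤ (c + 1) / (c - 1) * A → κ * A ≤ R) :
    d ^ 2 ≤ 2 * q₀ * M * (A + B) + (q + q₀) * L * (R / κ - B) := by
  have hLA : L * A ≤ L * (R / κ) := by
    rcases ((mul_nonneg (by linarith) hM).trans hML).eq_or_lt with rfl | hL
    · simp
    refine mul_le_mul_of_nonneg_left ((le_div_iff₀ hκ).2 ?_) hL.le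
    linarith [hRE (le_div_mul_of_basic_inequalities hL hc (by linarith) hlow ha hup hML)]
  calc d ^ 2 = (q + q₀) * (q - q₀) + 2 * q₀ * a := by rw [hd]; ring
    _ ≤ (q + q₀) * (L * A - L * B) + 2 * q₀ * (M * (A + B)) := by
      rw [← mul_sub]
      gcongr
    _ ≤ (q + q₀) * (L * (R / κ) - L * B) + 2 * q₀ * (M * (A + B)) := by gcongr
    _ = 2 * q₀ * M * (A + B) + (q + q₀) * L * (R / κ - B) := by ring

end BasicInequalities

section Sums

variable {ι : Type*}

theorem sum_mul_le_mul_sum_abs (s : Finset ι) (δ S : ι → ℝ) {M : ℝ} (hM : ∀ j ∈ s, |S j| ≤ M) :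
    ∑ j ∈ s, δ j * S j ≤ M * ∑ j ∈ s, |δ j| := calc
  ∑ j ∈ s, δ j * S j ≤ ∑ j ∈ s, |δ j| * |S j| :=
    sum_le_sum fun j _ => (le_abs_self _).trans_eq (abs_mul _ _)
  _ ≤ ∑ j ∈ s, |δ j| * M :=
    sum_le_sum fun j hj => mul_le_mul_of_nonneg_left (hM j hj) (abs_nonneg _)
  _ = M * ∑ j ∈ s, |δ j| := by rw [← sum_mul, mul_comm]

variable [Fintype ι] [DecidableEq ι]

theorem sum_abs_sub_sum_abs_le_of_eq_zero_off (T : Finset ι) {β₀ : ι → ℝ}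
    (h₀ : ∀ j ∉ T, β₀ j = 0) (β : ι → ℝ) :
    ∑ j, |β₀ j| - ∑ j, |β j| ≤ ∑ j ∈ T, |β j - β₀ j| - ∑ j ∈ Tᶜ, |β j - β₀ j| := by
  have hT : ∑ j ∈ T, |β₀ j| - ∑ j ∈ T, |β j| ≤ ∑ j ∈ T, |β j - β₀ j| := by
    rw [← sum_sub_distrib]
    exact sum_le_sum fun j _ => abs_sub_comm (β j) _ ▸ abs_sub_abs_le_abs_sub _ _
  have hTc : ∀ j ∈ Tᶜ, |β₀ j| = 0 ∧ |β j - β₀ j| = |β j| := fun j hj => by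
    simp [h₀ j (mem_compl.1 hj)]
  rw [← sum_add_sum_compl T, ← sum_add_sum_compl T fun j => |β j|,
    sum_eq_zero fun j hj => (hTc j hj).1, sum_congr rfl fun j hj => (hTc j hj).2]
  linarith

theorem sub_le_of_add_mul_sum_abs_le {f : (ι → ℝ) → ℝ} {L : ℝ} (hL : 0 ≤ L) (T : Finset ι)
    {β₀ β : ι → ℝ} (h₀ : ∀ j ∉ T, β₀ j = 0)
    (hle : f β + L * ∑ j, |β j| ≤ f β₀ + L * ∑ j, |β₀ j|) :
    f β - f β₀ ≤ L * (∑ j ∈ T, |β j - β₀ j| - ∑ j ∈ Tᶜ, |β j - β₀ j|) := by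
  have := mul_le_mul_of_nonneg_left (sum_abs_sub_sum_abs_le_of_eq_zero_off T h₀ β) hL
  rw [mul_sub] at this
  linarith

end Sums

section LeastSquares

variable {ι : Type*} [Fintype ι] {m a : ℝ} (r w : ι → ℝ)

theorem mul_sum_sq_eq_of_cross_term (hm : 0 ≤ m)
    (ha : √(m * ∑ i, r i ^ 2) * a = m * ∑ i, r i * w i) :
    m * ∑ i, w i ^ 2 =
      √(m * ∑ i, (r i - w i) ^ 2) ^ 2 - √(m * ∑ i, r i ^ 2) ^ 2 + 2 * √(m * ∑ i, r i ^ 2) * a := by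
  rw [Real.sq_sqrt (by positivity), Real.sq_sqrt (by positivity), mul_assoc 2, ha]
  simp only [sub_sq, sum_add_distrib, sum_sub_distrib, mul_assoc, ← mul_sum]
  ring

theorem sqrt_sub_le_of_cross_term (hm : 0 ≤ m) (hr : 0 < √(m * ∑ i, r i ^ 2))
    (ha : √(m * ∑ i, r i ^ 2) * a = m * ∑ i, r i * w i) :
    √(m * ∑ i, r i ^ 2) - a ≤ √(m * ∑ i, (r i - w i) ^ 2) := by
  refine le_of_mul_le_mul_left ?_ hr
  calc √(m * ∑ i, r i ^ 2) * (√(m * ∑ i, r i ^ 2) - a) = m * ∑ i, r i * (r i - w i) := by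
        rw [mul_sub, ha, Real.mul_self_sqrt (by positivity)]
        simp only [mul_sub, sum_sub_distrib, sq]
    _ ≤ m * (√(∑ i, r i ^ 2) * √(∑ i, (r i - w i) ^ 2)) :=
      mul_le_mul_of_nonneg_left (Real.sum_mul_le_sqrt_mul_sqrt _ _ _) hm
    _ = √(m * ∑ i, r i ^ 2) * √(m * ∑ i, (r i - w i) ^ 2) := by
      rw [Real.sqrt_mul hm, Real.sqrt_mul hm, mul_mul_mul_comm, Real.mul_self_sqrt hm]

end LeastSquares

section Score

variable {ι κ : Type*} [Fintype ι] [Fintype κ]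

theorem sqrt_mul_sum_sq_mul_normalized_score {m σ : ℝ} (hσ : 0 ≤ σ) {ε : ι → ℝ}
    (hσε : 0 < m * ∑ i, (σ * ε i) ^ 2) (x : ι → κ → ℝ) (δ : κ → ℝ) :
    √(m * ∑ i, (σ * ε i) ^ 2) * ∑ j, δ j * ((m * ∑ i, x i j * ε i) / √(m * ∑ i, ε i ^ 2)) =
      m * ∑ i, σ * ε i * ∑ j, x i j * δ j := by
  have hσε' : m * ∑ i, (σ * ε i) ^ 2 = σ ^ 2 * (m * ∑ i, ε i ^ 2) := by
    simp only [mul_pow, ← mul_sum]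
    ring
  have hne : √(m * ∑ i, ε i ^ 2) ≠ 0 :=
    (Real.sqrt_pos.2 (pos_of_mul_pos_right (hσε' ▸ hσε) (sq_nonneg σ))).ne'
  calc _ = σ * ∑ j, δ j * (m * ∑ i, x i j * ε i) := by
        rw [hσε', Real.sqrt_mul (sq_nonneg σ), Real.sqrt_sq hσ]
        simp only [mul_div_assoc']
        rw [← sum_div]
        field_simp
    _ = _ := by
      simp only [mul_sum]
      rw [sum_comm]
      exact sum_congr rfl fun i _ => sum_congr rfl fun j _ => by ring

end Score

theorem sqrt_lasso_master_inequality_general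
    (n p : ℕ) (hn : 0 < n) (hp : 0 < p)
    (x : Fin n → Fin p → ℝ) (ε : Fin n → ℝ) (β₀ : Fin p → ℝ) (σ : ℝ) (hσ : 0 < σ)
    (y : Fin n → ℝ) (hy : ∀ i, y i = (∑ j, x i j * β₀ j) + σ * ε i)
    (T : Finset (Fin p)) (hT : ∀ j, j ∈ T ↔ β₀ j ≠ 0)
    (s : ℕ)
    (Q : (Fin p → ℝ) → ℝ)
    (hQ : ∀ β, Q β = (n : ℝ)⁻¹ * ∑ i, (y i - ∑ j, x i j * β j) ^ 2)
    (hQ0 : 0 < Q β₀)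
    (pnorm : (Fin p → ℝ) → ℝ)
    (hpnorm : ∀ δ : Fin p → ℝ,
      pnorm δ = Real.sqrt ((n : ℝ)⁻¹ * ∑ i, (∑ j, x i j * δ j) ^ 2))
    (S : Fin p → ℝ)
    (hS : ∀ j, S j = ((n : ℝ)⁻¹ * ∑ i, x i j * ε i) /
      Real.sqrt ((n : ℝ)⁻¹ * ∑ i, (ε i) ^ 2))
    (Sinf : ℝ)
    (hSinf : Sinf = Finset.univ.sup' ⟨⟨0, hp⟩, Finset.mem_univ _⟩ (fun j => |S j|))
    (c cbar κ lam : ℝ) (hc : 1 < c) (hcbar : cbar = (c + 1) / (c - 1))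
    (hκpos : 0 < κ)
    (hκ : ∀ δ : Fin p → ℝ, δ ≠ 0 → (∑ j ∈ Tᶜ, |δ j|) ≤ cbar * ∑ j ∈ T, |δ j| →
      κ * (∑ j ∈ T, |δ j|) ≤ Real.sqrt s * pnorm δ)
    (hlam : c * ((n : ℝ) * Sinf) ≤ lam)
    (βh : Fin p → ℝ)
    (hopt : ∀ β : Fin p → ℝ,
      Real.sqrt (Q βh) + (lam / n) * ∑ j, |βh j| ≤
      Real.sqrt (Q β) + (lam / n) * ∑ j, |β j|) :
    (pnorm (fun j => βh j - β₀ j)) ^ 2 ≤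
      2 * Real.sqrt (Q β₀) * Sinf * (∑ j, |βh j - β₀ j|) +
        (Real.sqrt (Q βh) + Real.sqrt (Q β₀)) * (lam / n) *
          (Real.sqrt s * pnorm (fun j => βh j - β₀ j) / κ -
            ∑ j ∈ Tᶜ, |βh j - β₀ j|) := by
  set δ : Fin p → ℝ := fun j => βh j - β₀ j
  set r : Fin n → ℝ := fun i => σ * ε i
  set w : Fin n → ℝ := fun i => ∑ j, x i j * δ j
  have hm : (0 : ℝ) ≤ (n : ℝ)⁻¹ := by positivity
  have hQ₀ : Q β₀ = (n : ℝ)⁻¹ * ∑ i, r i ^ 2 := by simp only [hQ, hy, add_sub_cancel_left, r]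
  have hQh : Q βh = (n : ℝ)⁻¹ * ∑ i, (r i - w i) ^ 2 := by
    simp only [hQ, hy, r, w, δ, mul_sub, sum_sub_distrib]
    exact congrArg _ (sum_congr rfl fun i _ => by ring)
  have hd : pnorm δ ^ 2 = (n : ℝ)⁻¹ * ∑ i, w i ^ 2 := by
    rw [hpnorm, Real.sq_sqrt (by positivity)]
  have hscore : √(Q β₀) * ∑ j, δ j * S j = (n : ℝ)⁻¹ * ∑ i, r i * w i := by
    simp only [hQ₀, hS]
    exact sqrt_mul_sum_sq_mul_normalized_score hσ.le (hQ₀ ▸ hQ0) x δ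
  have hM : ∀ j, |S j| ≤ Sinf := fun j => hSinf ▸ le_sup' (fun j => |S j|) (mem_univ j)
  have hM₀ : 0 ≤ Sinf := (abs_nonneg _).trans (hM ⟨0, hp⟩)
  have hML : c * Sinf ≤ lam / n := by
    rw [le_div_iff₀ (by exact_mod_cast hn)]
    linarith
  have hup := sub_le_of_add_mul_sum_abs_le (f := fun β => √(Q β))
    ((mul_nonneg (by linarith) hM₀).trans hML) T (fun j hj => not_not.1 (mt (hT j).2 hj)) (hopt β₀)
  have hRE : ∑ j ∈ Tᶜ, |δ j| ≤ cbar * ∑ j ∈ T, |δ j| → κ * ∑ j ∈ T, |δ j| ≤ √s * pnorm δ := by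
    rcases eq_or_ne δ 0 with hδ | hδ
    · simp [hδ, hpnorm]
    · exact hκ δ hδ
  rw [hQ₀] at hscore
  rw [hQ₀, hQh] at hup ⊢
  rw [← sum_add_sum_compl T]
  exact master_inequality_of_basic_inequalities (Real.sqrt_nonneg _) (Real.sqrt_nonneg _) hM₀
    (sum_nonneg fun j _ => abs_nonneg _) (sum_nonneg fun j _ => abs_nonneg _) hc hκpos
    (hd.trans (mul_sum_sq_eq_of_cross_term r w hm hscore))
    (sqrt_sub_le_of_cross_term r w hm (hQ₀ ▸ Real.sqrt_pos.2 hQ0) hscore)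
    ((sum_mul_le_mul_sum_abs _ δ S fun j _ => hM j).trans_eq (by rw [sum_add_sum_compl]))
    hup hML (hcbar ▸ hRE)

/-- The master inequality (Eq:Id) from the proof of Theorem 1:
`‖δ̂‖²_{2,n} ≤ 2√Q̂(β₀)‖S̃‖_∞‖δ̂‖₁ + (√Q̂(β̂)+√Q̂(β₀))(λ/n)(√s‖δ̂‖_{2,n}/κ_c̄ - ‖δ̂_{Tᶜ}‖₁)`. -/
theorem sqrt_lasso_master_inequality
    (n p : ℕ) (hn : 0 < n) (hp : 0 < p)
    (x : Fin n → Fin p → ℝ) (ε : Fin n → ℝ) (β₀ : Fin p → ℝ) (σ : ℝ) (hσ : 0 < σ)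
    (y : Fin n → ℝ) (hy : ∀ i, y i = (∑ j, x i j * β₀ j) + σ * ε i)
    (T : Finset (Fin p)) (hT : ∀ j, j ∈ T ↔ β₀ j ≠ 0)
    (s : ℕ) (hs : s = T.card) (hs1 : 1 ≤ s)
    (Q : (Fin p → ℝ) → ℝ)
    (hQ : ∀ β, Q β = (n : ℝ)⁻¹ * ∑ i, (y i - ∑ j, x i j * β j) ^ 2)
    (hQ0 : 0 < Q β₀)
    (pnorm : (Fin p → ℝ) → ℝ)
    (hpnorm : ∀ δ : Fin p → ℝ,
      pnorm δ = Real.sqrt ((n : ℝ)⁻¹ * ∑ i, (∑ j, x i j * δ j) ^ 2))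
    (S : Fin p → ℝ)
    (hS : ∀ j, S j = ((n : ℝ)⁻¹ * ∑ i, x i j * ε i) /
      Real.sqrt ((n : ℝ)⁻¹ * ∑ i, (ε i) ^ 2))
    (Sinf : ℝ)
    (hSinf : Sinf = Finset.univ.sup' ⟨⟨0, hp⟩, Finset.mem_univ _⟩ (fun j => |S j|))
    (c cbar κ lam : ℝ) (hc : 1 < c) (hcbar : cbar = (c + 1) / (c - 1))
    (hκpos : 0 < κ)
    (hκ : ∀ δ : Fin p → ℝ, δ ≠ 0 → (∑ j ∈ Tᶜ, |δ j|) ≤ cbar * ∑ j ∈ T, |δ j| →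
      κ * (∑ j ∈ T, |δ j|) ≤ Real.sqrt s * pnorm δ)
    (hlam : c * ((n : ℝ) * Sinf) ≤ lam)
    (βh : Fin p → ℝ)
    (hopt : ∀ β : Fin p → ℝ,
      Real.sqrt (Q βh) + (lam / n) * ∑ j, |βh j| ≤
      Real.sqrt (Q β) + (lam / n) * ∑ j, |β j|) :
    (pnorm (fun j => βh j - β₀ j)) ^ 2 ≤
      2 * Real.sqrt (Q β₀) * Sinf * (∑ j, |βh j - β₀ j|) +
        (Real.sqrt (Q βh) + Real.sqrt (Q β₀)) * (lam / n) *
          (Real.sqrt s * pnorm (fun j => βh j - β₀ j) / κ -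
            ∑ j ∈ Tᶜ, |βh j - β₀ j|) :=
  sqrt_lasso_master_inequality_general n p hn hp x ε β₀ σ hσ y hy T hT s Q hQ hQ0 pnorm hpnorm S hS
    Sinf hSinf c cbar κ lam hc hcbar hκpos hκ hlam βh hopt
end

section
/- For α ∈ (0,1) and p ≥ 1 with p/α > 8, let t = Φ⁻¹(1 − α/(2p)) and let 0 < r < 1. Then 2p·Φ̄(t(1 − r)) ≤ α·{1 + 1/log(p/α)}·exp{2·log(2p/α)·r}/(1 − r). (Gaussian tail estimate from the proof of Lemma 1(ii).) -/
/-!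
Mills' ratio bounds `s φ(s) / (1 + s²) ≤ Φ̄(s) ≤ φ(s) / s` follow by integrating over `(s, ∞)` the
derivatives `x φ(x) ≥ s φ(x)` of `-φ` and `φ(x) - 2 φ(x) / (1 + x²)² ≤ φ(x)` of
`-x φ(x) / (1 + x²)`. Since `φ(s(1 - r)) ≤ φ(s) e^{s² r}`, they give
`Φ̄(s(1 - r)) ≤ Φ̄(s) (1 + 1/s²) e^{s² r} / (1 - r)`, and at `s = t` we have `2p Φ̄(t) = α`.
It remains to locate `t`: the upper bound gives `Φ̄(t) ≤ e^{-t²/2}`, i.e. `t² ≤ 2 log(2p/α)`, and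
the lower bound at `√log(p/α)` exceeds `α/(2p)` once `p/α ≥ 8`, so `log(p/α) ≤ t²`.
-/

open ProbabilityTheory MeasureTheory Real Set Filter Topology

local notation "φ" => gaussianPDFReal 0 1

noncomputable def stdGaussianTail (u : ℝ) : ℝ := (gaussianReal 0 1).real (Ioi u)

lemma one_sub_gaussianReal_Iic (u : ℝ) :
    1 - ((gaussianReal 0 1) (Iic u)).toReal = stdGaussianTail u := by
  rw [stdGaussianTail, ← compl_Iic, probReal_compl_eq_one_sub measurableSet_Iic, measureReal_def]

lemma stdGaussianTail_antitone : Antitone stdGaussianTail :=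
  fun _ _ h ↦ measureReal_mono (Ioi_subset_Ioi h)

lemma stdGaussianTail_eq_integral (u : ℝ) : stdGaussianTail u = ∫ x in Ioi u, φ x := by
  rw [stdGaussianTail, measureReal_def, gaussianReal_apply_eq_integral 0 one_ne_zero,
    ENNReal.toReal_ofReal
      (setIntegral_nonneg measurableSet_Ioi fun x _ ↦ gaussianPDFReal_nonneg 0 1 x)]

lemma gaussianPDFReal_zero_one (x : ℝ) : φ x = (√(2 * π))⁻¹ * exp (-x ^ 2 / 2) := by
  simp [gaussianPDFReal]

lemma gaussianPDFReal_zero_one_eq : φ = fun x ↦ (√(2 * π))⁻¹ * exp (-x ^ 2 / 2) :=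
  funext gaussianPDFReal_zero_one

lemma hasDerivAt_gaussianPDFReal_zero_one (x : ℝ) : HasDerivAt φ (-(x * φ x)) x := by
  have h : HasDerivAt (fun y : ℝ ↦ -y ^ 2 / 2) (-x) x := by
    refine ((hasDerivAt_pow 2 x).neg.div_const 2).congr_deriv ?_
    simp only [Nat.cast_ofNat]; ring
  rw [gaussianPDFReal_zero_one_eq]
  exact (h.exp.const_mul _).congr_deriv (by ring)

lemma tendsto_gaussianPDFReal_zero_one_atTop : Tendsto φ atTop (𝓝 0) := by
  have h : Tendsto (fun x : ℝ ↦ -x ^ 2 / 2) atTop atBot :=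
    (tendsto_neg_atTop_atBot.comp (tendsto_pow_atTop two_ne_zero)).atBot_div_const two_pos
  rw [gaussianPDFReal_zero_one_eq, ← mul_zero (√(2 * π))⁻¹]
  exact (tendsto_exp_atBot.comp h).const_mul _

lemma hasDerivAt_neg_gaussianPDFReal_zero_one (x : ℝ) :
    HasDerivAt (fun y ↦ -φ y) (x * φ x) x :=
  (hasDerivAt_gaussianPDFReal_zero_one x).neg.congr_deriv (neg_neg _)

lemma tendsto_neg_gaussianPDFReal_zero_one_atTop :
    Tendsto (fun y ↦ -φ y) atTop (𝓝 0) := by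
  simpa using tendsto_gaussianPDFReal_zero_one_atTop.neg

lemma mul_gaussianPDFReal_zero_one_nonneg {s : ℝ} (hs : 0 ≤ s) : ∀ x ∈ Ioi s, 0 ≤ x * φ x :=
  fun x hx ↦ mul_nonneg (hs.trans hx.out.le) (gaussianPDFReal_nonneg 0 1 x)

lemma integrableOn_Ioi_mul_gaussianPDFReal_zero_one {s : ℝ} (hs : 0 ≤ s) :
    IntegrableOn (fun x ↦ x * φ x) (Ioi s) :=
  integrableOn_Ioi_deriv_of_nonneg' (fun x _ ↦ hasDerivAt_neg_gaussianPDFReal_zero_one x)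
    (mul_gaussianPDFReal_zero_one_nonneg hs) tendsto_neg_gaussianPDFReal_zero_one_atTop

lemma integral_Ioi_mul_gaussianPDFReal_zero_one {s : ℝ} (hs : 0 ≤ s) :
    ∫ x in Ioi s, x * φ x = φ s := by
  simpa using integral_Ioi_of_hasDerivAt_of_nonneg'
    (fun x _ ↦ hasDerivAt_neg_gaussianPDFReal_zero_one x)
    (mul_gaussianPDFReal_zero_one_nonneg hs) tendsto_neg_gaussianPDFReal_zero_one_atTop

theorem stdGaussianTail_le_div {s : ℝ} (hs : 0 < s) : stdGaussianTail s ≤ φ s / s := by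
  calc stdGaussianTail s
      ≤ ∫ x in Ioi s, s⁻¹ * (x * φ x) := by
        rw [stdGaussianTail_eq_integral]
        refine setIntegral_mono_on (integrable_gaussianPDFReal 0 1).integrableOn
          ((integrableOn_Ioi_mul_gaussianPDFReal_zero_one hs.le).const_mul s⁻¹) measurableSet_Ioi
          fun x hx ↦ ?_
        rw [← mul_assoc, ← div_eq_inv_mul]
        exact le_mul_of_one_le_left (gaussianPDFReal_nonneg 0 1 x) ((one_le_div hs).2 hx.out.le)
    _ = φ s / s := by
        rw [integral_const_mul, integral_Ioi_mul_gaussianPDFReal_zero_one hs.le, div_eq_inv_mul]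

lemma hasDerivAt_neg_div_one_add_sq_mul_gaussianPDFReal_zero_one (x : ℝ) :
    HasDerivAt (fun y ↦ -(y / (1 + y ^ 2) * φ y)) (φ x - 2 * φ x / (1 + x ^ 2) ^ 2) x := by
  have hpos : (1 + x ^ 2) ≠ 0 := by positivity
  have hratio : HasDerivAt (fun y : ℝ ↦ y / (1 + y ^ 2)) ((1 - x ^ 2) / (1 + x ^ 2) ^ 2) x := by
    refine ((hasDerivAt_id x).div ((hasDerivAt_pow 2 x).const_add 1) hpos).congr_deriv ?_
    simp only [id_eq, Nat.cast_ofNat]; ring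
  refine (hratio.mul (hasDerivAt_gaussianPDFReal_zero_one x)).neg.congr_deriv ?_
  field_simp
  ring

lemma integrable_gaussianPDFReal_zero_one_div_one_add_sq_sq :
    Integrable fun x ↦ 2 * φ x / (1 + x ^ 2) ^ 2 := by
  refine ((integrable_gaussianPDFReal 0 1).const_mul 2).mono'
    (Measurable.aestronglyMeasurable (by fun_prop)) (ae_of_all _ fun x ↦ ?_)
  have h1 : 1 ≤ (1 + x ^ 2) ^ 2 := one_le_pow₀ (by nlinarith)
  rw [Real.norm_of_nonneg (by positivity [gaussianPDFReal_nonneg 0 1 x])]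
  exact div_le_self (by positivity [gaussianPDFReal_nonneg 0 1 x]) h1

theorem mul_div_one_add_sq_le_stdGaussianTail (s : ℝ) :
    s / (1 + s ^ 2) * φ s ≤ stdGaussianTail s := by
  have hlim : Tendsto (fun y ↦ -(y / (1 + y ^ 2) * φ y)) atTop (𝓝 0) := by
    have hbdd : IsBoundedUnder (· ≤ ·) atTop fun y : ℝ ↦ ‖y / (1 + y ^ 2)‖ := by
      refine isBoundedUnder_of ⟨1, fun y ↦ ?_⟩
      rw [norm_div, Real.norm_of_nonneg (by positivity : (0 : ℝ) ≤ 1 + y ^ 2),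
        div_le_one (by positivity)]
      exact abs_le.2 ⟨by nlinarith, by nlinarith⟩
    simpa [mul_comm] using
      (tendsto_gaussianPDFReal_zero_one_atTop.zero_mul_isBoundedUnder_le hbdd).neg
  have hint : IntegrableOn (fun x ↦ φ x - 2 * φ x / (1 + x ^ 2) ^ 2) (Ioi s) :=
    ((integrable_gaussianPDFReal 0 1).sub
      integrable_gaussianPDFReal_zero_one_div_one_add_sq_sq).integrableOn
  have heq := integral_Ioi_of_hasDerivAt_of_tendsto'
    (fun x _ ↦ hasDerivAt_neg_div_one_add_sq_mul_gaussianPDFReal_zero_one x) hint hlim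
  rw [zero_sub, neg_neg] at heq
  rw [← heq, stdGaussianTail_eq_integral]
  refine setIntegral_mono_on hint (integrable_gaussianPDFReal 0 1).integrableOn measurableSet_Ioi
    fun x _ ↦ sub_le_self _ ?_
  positivity [gaussianPDFReal_nonneg 0 1 x]

theorem stdGaussianTail_le_exp {s : ℝ} (hs : 1 ≤ √(2 * π) * s) :
    stdGaussianTail s ≤ exp (-s ^ 2 / 2) := by
  have hs0 : 0 < s := pos_of_mul_pos_right (one_pos.trans_le hs) (sqrt_nonneg _)
  calc stdGaussianTail s ≤ φ s / s := stdGaussianTail_le_div hs0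
    _ = exp (-s ^ 2 / 2) / (√(2 * π) * s) := by
        rw [gaussianPDFReal_zero_one, inv_mul_eq_div, div_div]
    _ ≤ exp (-s ^ 2 / 2) := div_le_self (exp_pos _).le hs

lemma two_mul_pi_mul_one_add_sq_lt {L : ℝ} (hL : log 8 ≤ L) :
    2 * π * (1 + L) ^ 2 < 4 * L * exp L := by
  have hlog8 : log 8 = 3 * log 2 := by
    rw [show (8 : ℝ) = 2 ^ 3 by norm_num, Real.log_pow, Nat.cast_ofNat]
  -- the tangent line of `exp` at `log 8` already suffices
  have hexp : 8 * (1 + (L - log 8)) ≤ exp L := by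
    have := add_one_le_exp (L - log 8)
    rw [exp_sub, exp_log (by norm_num)] at this
    linarith
  have h2lo := log_two_gt_d9
  have h2hi := log_two_lt_d9
  have hpi := pi_lt_d6
  rw [hlog8] at hL hexp
  nlinarith [mul_le_mul_of_nonneg_left hexp (by linarith : (0 : ℝ) ≤ 4 * L),
    mul_nonneg (sub_nonneg.2 hL) (sub_nonneg.2 hL)]

theorem inv_two_mul_lt_stdGaussianTail_sqrt_log {x : ℝ} (hx : 8 ≤ x) :
    (2 * x)⁻¹ < stdGaussianTail √(log x) := by
  set L := log x
  have hL : log 8 ≤ L := log_le_log (by norm_num) hx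
  have hL0 : 0 < L := (log_pos (by norm_num)).trans_le hL
  have hsq : √L ^ 2 = L := sq_sqrt hL0.le
  have key : √(2 * π) * (1 + L) < 2 * √L * exp (L / 2) := by
    rw [← pow_lt_pow_iff_left₀ (by positivity) (by positivity) two_ne_zero]
    calc (√(2 * π) * (1 + L)) ^ 2 = 2 * π * (1 + L) ^ 2 := by
          rw [mul_pow, sq_sqrt (by positivity)]
      _ < 4 * L * exp L := two_mul_pi_mul_one_add_sq_lt hL
      _ = (2 * √L * exp (L / 2)) ^ 2 := by
          rw [mul_pow, mul_pow, hsq, ← exp_nat_mul]; ring_nf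
  have hx' : x = exp (L / 2) ^ 2 := by
    rw [← exp_nat_mul, Nat.cast_ofNat, mul_div_cancel₀ _ two_ne_zero, exp_log (by linarith)]
  refine lt_of_lt_of_le ?_ (mul_div_one_add_sq_le_stdGaussianTail √L)
  rw [gaussianPDFReal_zero_one, hsq, neg_div, exp_neg, hx']
  field_simp
  linarith

theorem sqrt_log_lt_of_stdGaussianTail_eq {x t : ℝ} (hx : 8 ≤ x)
    (ht : stdGaussianTail t = (2 * x)⁻¹) : √(log x) < t := by
  by_contra! h
  exact (inv_two_mul_lt_stdGaussianTail_sqrt_log hx).not_ge (ht ▸ stdGaussianTail_antitone h)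

theorem sq_le_two_mul_log_of_stdGaussianTail_eq {x t : ℝ} (hx : 8 ≤ x)
    (ht : stdGaussianTail t = (2 * x)⁻¹) : t ^ 2 ≤ 2 * log (2 * x) := by
  have hsqrt_lt := sqrt_log_lt_of_stdGaussianTail_eq hx ht
  have ht0 : 0 < t := (sqrt_nonneg _).trans_lt hsqrt_lt
  have hlog : 1 < log x := (lt_log_iff_exp_lt (by linarith)).2 (by linarith [exp_one_lt_d9])
  have ht1 : 1 < t := (one_lt_sq_iff₀ ht0.le).1 (hlog.trans ((sqrt_lt' ht0).1 hsqrt_lt))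
  have hpi : 1 ≤ √(2 * π) := one_le_sqrt.2 (by linarith [pi_gt_three])
  have h := stdGaussianTail_le_exp (one_le_mul_of_one_le_of_one_le hpi ht1.le)
  rw [ht, ← exp_log (by linarith : 0 < 2 * x), ← exp_neg, exp_le_exp] at h
  linarith

lemma gaussianPDFReal_zero_one_mul_one_sub_le (s r : ℝ) :
    φ (s * (1 - r)) ≤ φ s * exp (s ^ 2 * r) := by
  rw [gaussianPDFReal_zero_one, gaussianPDFReal_zero_one, mul_assoc, ← exp_add]
  gcongr
  nlinarith [sq_nonneg (s * r)]

theorem stdGaussianTail_mul_one_sub_le {s r : ℝ} (hs : 0 < s) (hr : r < 1) :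
    stdGaussianTail (s * (1 - r)) ≤
      stdGaussianTail s * (1 + 1 / s ^ 2) * exp (s ^ 2 * r) / (1 - r) := by
  have hr' : 0 < 1 - r := sub_pos.2 hr
  calc stdGaussianTail (s * (1 - r)) ≤ φ (s * (1 - r)) / (s * (1 - r)) :=
        stdGaussianTail_le_div (mul_pos hs hr')
    _ ≤ φ s * exp (s ^ 2 * r) / (s * (1 - r)) := by
        gcongr; exact gaussianPDFReal_zero_one_mul_one_sub_le s r
    _ = s / (1 + s ^ 2) * φ s * (1 + 1 / s ^ 2) * exp (s ^ 2 * r) / (1 - r) := by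
        field_simp; ring
    _ ≤ stdGaussianTail s * (1 + 1 / s ^ 2) * exp (s ^ 2 * r) / (1 - r) := by
        gcongr; exact mul_div_one_add_sq_le_stdGaussianTail s

theorem gaussian_tail_estimate_ii_general
    (p : ℕ) (hp : 0 < p)
    (α : ℝ) (hα0 : 0 < α)
    (hp8 : 8 < (p : ℝ) / α)
    (Φ : ℝ → ℝ) (hΦ : ∀ u, Φ u = ((gaussianReal 0 1) (Set.Iic u)).toReal)
    (t : ℝ) (ht : Φ t = 1 - α / (2 * p))
    (r : ℝ) (hr0 : 0 < r) (hr1 : r < 1) :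
    2 * p * (1 - Φ (t * (1 - r))) ≤
      α * (1 + 1 / Real.log ((p : ℝ) / α)) *
        Real.exp (2 * Real.log (2 * p / α) * r) / (1 - r) := by
  have htail : stdGaussianTail t = (2 * (p / α))⁻¹ := by
    rw [← one_sub_gaussianReal_Iic, ← hΦ, ht]; field_simp; ring
  have ht0 : 0 < t := (sqrt_nonneg _).trans_lt (sqrt_log_lt_of_stdGaussianTail_eq hp8.le htail)
  have hlog_le : log (p / α) ≤ t ^ 2 :=
    ((sqrt_lt' ht0).1 (sqrt_log_lt_of_stdGaussianTail_eq hp8.le htail)).le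
  have hsq_le : t ^ 2 ≤ 2 * log (2 * p / α) := by
    simpa only [mul_div_assoc] using sq_le_two_mul_log_of_stdGaussianTail_eq hp8.le htail
  have hlog_pos : 0 < log (p / α) := log_pos (by linarith)
  calc 2 * p * (1 - Φ (t * (1 - r)))
      ≤ 2 * p * (stdGaussianTail t * (1 + 1 / t ^ 2) * exp (t ^ 2 * r) / (1 - r)) := by
        rw [hΦ, one_sub_gaussianReal_Iic]
        gcongr
        exact stdGaussianTail_mul_one_sub_le ht0 hr1
    _ = α * (1 + 1 / t ^ 2) * exp (t ^ 2 * r) / (1 - r) := by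
        rw [htail]; field_simp
    _ ≤ α * (1 + 1 / log (p / α)) * exp (2 * log (2 * p / α) * r) / (1 - r) := by
        have := sub_pos.2 hr1
        gcongr

/-- Gaussian tail estimate from the proof of Lemma 1(ii): for `p/α > 8`,
`t = Φ⁻¹(1 - α/(2p))` and `0 < r < 1`,
`2p Φ̄(t(1-r)) ≤ α {1 + 1/log(p/α)} exp{2 log(2p/α) r}/(1-r)`. -/
theorem gaussian_tail_estimate_ii
    (p : ℕ) (hp : 0 < p)
    (α : ℝ) (hα0 : 0 < α) (hα1 : α < 1)
    (hp8 : 8 < (p : ℝ) / α)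
    (Φ : ℝ → ℝ) (hΦ : ∀ u, Φ u = ((gaussianReal 0 1) (Set.Iic u)).toReal)
    (t : ℝ) (ht : Φ t = 1 - α / (2 * p))
    (r : ℝ) (hr0 : 0 < r) (hr1 : r < 1) :
    2 * p * (1 - Φ (t * (1 - r))) ≤
      α * (1 + 1 / Real.log ((p : ℝ) / α)) *
        Real.exp (2 * Real.log (2 * p / α) * r) / (1 - r) :=
  gaussian_tail_estimate_ii_general p hp α hα0 hp8 Φ hΦ t ht r hr0 hr1
end

section
/- Strong duality for the square-root lasso: if β̂ minimizes β ↦ √(Q̂(β)) + (λ/n)‖β‖₁ over ℝᵖ and Y ≠ Xβ̂, then the vector â = √n·(Y − Xβ̂)/‖Y − Xβ̂‖₂ is dual feasible, i.e., ‖â‖₂ ≤ √n and |Σᵢ x_{ij}âᵢ|/n ≤ λ/n for all j = 1,…,p, and it attains the primal optimal value: (1/n)Σᵢ yᵢâᵢ = ‖Y − Xβ̂‖₂/√n + (λ/n)‖β̂‖₁. (Part of Theorem 2.) -/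
/-!
Write `r = Y - Xβ̂`, `μ = λ/√n`, and let `xⱼ` be the `j`-th column of `X`. Moving `β̂` to
`β̂ + t eⱼ` and bounding the new `‖r - t xⱼ‖` by the tangent line of `√` at `‖r‖²` gives, for all
`t`, `t ⟨xⱼ, r⟩/‖r‖ ≤ t² ‖xⱼ‖²/(2‖r‖) + μ (|β̂ⱼ + t| - |β̂ⱼ|)`. Letting `t → 0±` yields the KKT
conditions `|⟨xⱼ, r⟩| ≤ μ‖r‖` and `β̂ⱼ ⟨xⱼ, r⟩ = μ‖r‖ |β̂ⱼ|`. The first is dual feasibility of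
`â = √n r/‖r‖`; summing the second over `j` in `⟨Y, r⟩ = ‖r‖² + ⟨β̂, Xᵀr⟩` gives the dual value.
-/

open Filter Topology Matrix

lemma le_of_forall_mem_Ioo_le_add_mul {a c D δ : ℝ} (hδ : 0 < δ)
    (h : ∀ s ∈ Set.Ioo 0 δ, a ≤ c + s * D) : a ≤ c := by
  have hlim : Tendsto (fun s => c + s * D) (𝓝[>] 0) (𝓝 c) := by
    have : Tendsto (fun s => c + s * D) (𝓝 0) (𝓝 (c + 0 * D)) :=
      (continuous_const.add (continuous_id.mul continuous_const)).tendsto 0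
    simpa using this.mono_left nhdsWithin_le_nhds
  exact ge_of_tendsto hlim (eventually_of_mem (Ioo_mem_nhdsGT hδ) h)

lemma le_and_le_of_forall_mul_le {C D L b : ℝ} (hL : 0 ≤ L)
    (H : ∀ t, t * C ≤ t ^ 2 * D + L * (|b + t| - |b|)) : C ≤ L ∧ (0 < b → L ≤ C) := by
  constructor
  · refine le_of_forall_mem_Ioo_le_add_mul (D := D) one_pos fun s ⟨hs, _⟩ => ?_
    have hinc : |b + s| - |b| ≤ s := by linarith [abs_add_le b s, abs_of_pos hs]
    have := H s
    exact le_of_mul_le_mul_left (by nlinarith [mul_le_mul_of_nonneg_left hinc hL]) hs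
  · intro hb
    refine le_of_forall_mem_Ioo_le_add_mul (D := D) hb fun s ⟨hs, hsb⟩ => ?_
    have := H (-s)
    rw [abs_of_pos (by linarith : 0 < b + -s), abs_of_pos hb] at this
    exact le_of_mul_le_mul_left (by nlinarith) hs

/-- The hypothesis says that `0` minimizes `t ↦ t² D + L |b + t| - t C`; the conclusion is the
subgradient condition `C ∈ L · ∂|·|(b)`. -/
lemma abs_le_and_mul_eq_of_forall_mul_le {C D L b : ℝ} (hL : 0 ≤ L)
    (H : ∀ t, t * C ≤ t ^ 2 * D + L * (|b + t| - |b|)) : |C| ≤ L ∧ b * C = L * |b| := by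
  obtain ⟨hC, hCb⟩ := le_and_le_of_forall_mul_le hL H
  obtain ⟨hC', hCb'⟩ := le_and_le_of_forall_mul_le (C := -C) (D := D) (b := -b) hL fun t => by
    have := H (-t)
    rw [neg_sq] at this
    rw [abs_neg, show -b + t = -(b + -t) by ring, abs_neg]
    linarith
  refine ⟨abs_le.2 ⟨by linarith, hC⟩, ?_⟩
  rcases lt_trichotomy b 0 with hb | rfl | hb
  · rw [abs_of_neg hb, show C = -L by linarith [hCb' (neg_pos.2 hb)]]; ring
  · simp
  · rw [abs_of_pos hb, le_antisymm hC (hCb hb)]; ring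

lemma sqrt_div_add_div_mul (S lam A : ℝ) {c : ℝ} (hc : 0 ≤ c) :
    √(S / c) + lam / c * A = (√S + lam / √c * A) / √c := by
  rw [Real.sqrt_div' S hc, add_div, mul_div_right_comm, div_div, Real.mul_self_sqrt hc]

section DotProduct

variable {ι R : Type*} [Fintype ι]

lemma dotProduct_self_eq_sum_sq [Semiring R] (v : ι → R) : v ⬝ᵥ v = ∑ i, v i ^ 2 := by
  simp only [dotProduct, sq]

variable [Ring R] [LinearOrder R] [IsStrictOrderedRing R]

lemma dotProduct_self_nonneg (v : ι → R) : 0 ≤ v ⬝ᵥ v :=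
  Finset.sum_nonneg fun i _ => mul_self_nonneg (v i)

lemma dotProduct_self_pos_of_ne_zero {v : ι → R} (hv : v ≠ 0) : 0 < v ⬝ᵥ v :=
  (dotProduct_self_nonneg v).lt_of_ne (Ne.symm (dotProduct_self_eq_zero.not.2 hv))

end DotProduct

section CoordinateMove

variable {ι κ R : Type*} [Fintype κ] [DecidableEq κ]

lemma sub_mulVec_add_single [CommRing R] (X : Matrix ι κ R) (y : ι → R) (β : κ → R) (j : κ)
    (t : R) : y - X *ᵥ (β + Pi.single j t) = (y - X *ᵥ β) - t • X.col j := by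
  rw [mulVec_add, mulVec_single, op_smul_eq_smul, sub_add_eq_sub_sub]

lemma sum_abs_add_single [AddCommGroup R] [LinearOrder R] [IsOrderedAddMonoid R] (β : κ → R)
    (j : κ) (t : R) :
    ∑ k, |(β + Pi.single j t : κ → R) k| = ∑ k, |β k| + (|β j + t| - |β j|) := by
  rw [← sub_eq_iff_eq_add', ← Finset.sum_sub_distrib, Finset.sum_eq_single j]
  · simp
  · intro k _ hk
    simp [hk]
  · simp

end CoordinateMove

section SqrtLasso

variable {ι κ : Type*} [Fintype ι] [Fintype κ]

/-- `√n` times the objective `√(Q̂ β) + (λ/n) ‖β‖₁`, when `μ = λ/√n`. -/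
noncomputable def sqrtLassoObjective (X : Matrix ι κ ℝ) (y : ι → ℝ) (μ : ℝ) (β : κ → ℝ) : ℝ :=
  √((y - X *ᵥ β) ⬝ᵥ (y - X *ᵥ β)) + μ * ∑ j, |β j|

variable {X : Matrix ι κ ℝ} {y : ι → ℝ} {μ : ℝ} {β₀ : κ → ℝ}

lemma sqrtLasso_mul_le_of_forall_le
    (hmin : ∀ β, sqrtLassoObjective X y μ β₀ ≤ sqrtLassoObjective X y μ β)
    (hr : y - X *ᵥ β₀ ≠ 0) (j : κ) (t : ℝ) :
    t * ((Xᵀ *ᵥ (y - X *ᵥ β₀)) j / √((y - X *ᵥ β₀) ⬝ᵥ (y - X *ᵥ β₀))) ≤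
      t ^ 2 * (X.col j ⬝ᵥ X.col j / (2 * √((y - X *ᵥ β₀) ⬝ᵥ (y - X *ᵥ β₀)))) +
        μ * (|β₀ j + t| - |β₀ j|) := by
  classical
  have hmove := hmin (β₀ + Pi.single j t)
  rw [sqrtLassoObjective, sqrtLassoObjective, sub_mulVec_add_single, sum_abs_add_single] at hmove
  have hc : (Xᵀ *ᵥ (y - X *ᵥ β₀)) j = X.col j ⬝ᵥ (y - X *ᵥ β₀) := rfl
  rw [hc]
  generalize y - X *ᵥ β₀ = r at *
  have hρ2 : √(r ⬝ᵥ r) ^ 2 = r ⬝ᵥ r := Real.sq_sqrt (dotProduct_self_pos_of_ne_zero hr).le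
  have hρ : 0 < √(r ⬝ᵥ r) := Real.sqrt_pos.2 (dotProduct_self_pos_of_ne_zero hr)
  have hT : (r - t • X.col j) ⬝ᵥ (r - t • X.col j) =
      r ⬝ᵥ r - 2 * t * (X.col j ⬝ᵥ r) + t ^ 2 * (X.col j ⬝ᵥ X.col j) := by
    simp only [sub_dotProduct, dotProduct_sub, smul_dotProduct, dotProduct_smul, smul_eq_mul,
      dotProduct_comm r]
    ring
  have hs2 : √((r - t • X.col j) ⬝ᵥ (r - t • X.col j)) ^ 2 =
      r ⬝ᵥ r - 2 * t * (X.col j ⬝ᵥ r) + t ^ 2 * (X.col j ⬝ᵥ X.col j) := by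
    rw [Real.sq_sqrt (dotProduct_self_nonneg _), hT]
  -- `2ρs ≤ ρ² + s²` puts `s` below the tangent line of `√` at `ρ²`
  have hAMGM := two_mul_le_add_sq (√(r ⬝ᵥ r)) √((r - t • X.col j) ⬝ᵥ (r - t • X.col j))
  generalize √(r ⬝ᵥ r) = ρ at *
  generalize √((r - t • X.col j) ⬝ᵥ (r - t • X.col j)) = s at *
  have htangent : s ≤ ρ - t * (X.col j ⬝ᵥ r / ρ) + t ^ 2 * (X.col j ⬝ᵥ X.col j / (2 * ρ)) := by
    have : ρ - t * (X.col j ⬝ᵥ r / ρ) + t ^ 2 * (X.col j ⬝ᵥ X.col j / (2 * ρ)) - s =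
        (ρ ^ 2 + s ^ 2 - 2 * ρ * s) / (2 * ρ) := by
      rw [hs2, ← hρ2]
      field_simp
      ring
    nlinarith [div_nonneg (sub_nonneg.2 hAMGM) (by positivity : (0 : ℝ) ≤ 2 * ρ)]
  linarith

theorem sqrtLasso_kkt (hμ : 0 ≤ μ)
    (hmin : ∀ β, sqrtLassoObjective X y μ β₀ ≤ sqrtLassoObjective X y μ β)
    (hr : y - X *ᵥ β₀ ≠ 0) (j : κ) :
    |(Xᵀ *ᵥ (y - X *ᵥ β₀)) j| ≤ μ * √((y - X *ᵥ β₀) ⬝ᵥ (y - X *ᵥ β₀)) ∧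
      β₀ j * (Xᵀ *ᵥ (y - X *ᵥ β₀)) j = μ * √((y - X *ᵥ β₀) ⬝ᵥ (y - X *ᵥ β₀)) * |β₀ j| := by
  have hρ := Real.sqrt_pos.2 (dotProduct_self_pos_of_ne_zero hr)
  obtain ⟨habs, heq⟩ :=
    abs_le_and_mul_eq_of_forall_mul_le hμ (sqrtLasso_mul_le_of_forall_le hmin hr j)
  rw [abs_div, abs_of_pos hρ, div_le_iff₀ hρ] at habs
  rw [mul_div_assoc', div_eq_iff hρ.ne'] at heq
  exact ⟨habs, by rw [heq]; ring⟩

theorem sqrtLasso_dual_certificate (hμ : 0 ≤ μ)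
    (hmin : ∀ β, sqrtLassoObjective X y μ β₀ ≤ sqrtLassoObjective X y μ β)
    (hr : y - X *ᵥ β₀ ≠ 0) {s : ℝ} (hs : 0 ≤ s) {a : ι → ℝ}
    (ha : a = (s / √((y - X *ᵥ β₀) ⬝ᵥ (y - X *ᵥ β₀))) • (y - X *ᵥ β₀)) :
    a ⬝ᵥ a = s ^ 2 ∧ (∀ j, |(Xᵀ *ᵥ a) j| ≤ s * μ) ∧
      y ⬝ᵥ a = s * (√((y - X *ᵥ β₀) ⬝ᵥ (y - X *ᵥ β₀)) + μ * ∑ j, |β₀ j|) := by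
  have hkkt := sqrtLasso_kkt hμ hmin hr
  have hyr : y ⬝ᵥ (y - X *ᵥ β₀) =
      (y - X *ᵥ β₀) ⬝ᵥ (y - X *ᵥ β₀) + β₀ ⬝ᵥ (Xᵀ *ᵥ (y - X *ᵥ β₀)) := by
    rw [sub_dotProduct y, dotProduct_comm (X *ᵥ β₀), dotProduct_mulVec, ← mulVec_transpose,
      dotProduct_comm (Xᵀ *ᵥ _), sub_add_cancel]
  have hρ2 := Real.mul_self_sqrt (dotProduct_self_nonneg (y - X *ᵥ β₀))
  have hρ := Real.sqrt_pos.2 (dotProduct_self_pos_of_ne_zero hr)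
  generalize √((y - X *ᵥ β₀) ⬝ᵥ (y - X *ᵥ β₀)) = ρ at *
  subst ha
  refine ⟨?_, fun j => ?_, ?_⟩
  · rw [smul_dotProduct, dotProduct_smul, ← hρ2, smul_eq_mul, smul_eq_mul]
    field_simp
  · rw [mulVec_smul, Pi.smul_apply, smul_eq_mul, abs_mul, abs_div, abs_of_nonneg hs,
      abs_of_pos hρ, div_mul_eq_mul_div, div_le_iff₀ hρ, mul_assoc]
    exact mul_le_mul_of_nonneg_left (hkkt j).1 hs
  · have hsum : β₀ ⬝ᵥ (Xᵀ *ᵥ (y - X *ᵥ β₀)) = μ * ρ * ∑ j, |β₀ j| := by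
      rw [Finset.mul_sum]
      exact Finset.sum_congr rfl fun j _ => (hkkt j).2
    rw [dotProduct_smul, hyr, hsum, ← hρ2, smul_eq_mul]
    field_simp

end SqrtLasso

/-- Strong duality for the square-root lasso (part of Theorem 2): if `β̂`
minimizes the square-root lasso objective and `Y ≠ Xβ̂`, then
`â = √n (Y - Xβ̂)/‖Y - Xβ̂‖₂` is dual feasible and attains
the primal optimal value. -/
theorem sqrt_lasso_strong_duality
    (n p : ℕ) (hn : 0 < n)
    (x : Fin n → Fin p → ℝ) (y : Fin n → ℝ)
    (lam : ℝ) (hlam : 0 < lam)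
    (Q : (Fin p → ℝ) → ℝ)
    (hQ : ∀ β, Q β = (n : ℝ)⁻¹ * ∑ i, (y i - ∑ j, x i j * β j) ^ 2)
    (βh : Fin p → ℝ)
    (hopt : ∀ β : Fin p → ℝ,
      Real.sqrt (Q βh) + (lam / n) * ∑ j, |βh j| ≤
      Real.sqrt (Q β) + (lam / n) * ∑ j, |β j|)
    (hres : ∃ i, y i ≠ ∑ j, x i j * βh j)
    (ahat : Fin n → ℝ)
    (hahat : ∀ i, ahat i = Real.sqrt n * (y i - ∑ j, x i j * βh j) /
      Real.sqrt (∑ i', (y i' - ∑ j, x i' j * βh j) ^ 2)) :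
    Real.sqrt (∑ i, (ahat i) ^ 2) ≤ Real.sqrt n ∧
      (∀ j, |∑ i, x i j * ahat i| / n ≤ lam / n) ∧
      (n : ℝ)⁻¹ * ∑ i, y i * ahat i =
        Real.sqrt (∑ i, (y i - ∑ j, x i j * βh j) ^ 2) / Real.sqrt n +
          (lam / n) * ∑ j, |βh j| := by
  have hsn : 0 < √(n : ℝ) := Real.sqrt_pos.2 (Nat.cast_pos.2 hn)
  have hrss : ∀ β, ∑ i, (y i - ∑ j, x i j * β j) ^ 2 = (y - x *ᵥ β) ⬝ᵥ (y - x *ᵥ β) :=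
    fun β => (dotProduct_self_eq_sum_sq _).symm
  have hmin : ∀ β, sqrtLassoObjective x y (lam / √n) βh ≤ sqrtLassoObjective x y (lam / √n) β :=
    fun β => (div_le_div_iff_of_pos_right hsn).1 <| by
      simpa only [sqrtLassoObjective, hQ, hrss, inv_mul_eq_div,
        sqrt_div_add_div_mul _ _ _ n.cast_nonneg] using hopt β
  have hr : y - x *ᵥ βh ≠ 0 := fun h => hres.elim fun i hi => hi (sub_eq_zero.1 (congrFun h i))
  have ha : ahat = (√(n : ℝ) / √((y - x *ᵥ βh) ⬝ᵥ (y - x *ᵥ βh))) • (y - x *ᵥ βh) := by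
    ext i
    rw [hahat, hrss, Pi.smul_apply, smul_eq_mul, mul_div_right_comm]
    rfl
  obtain ⟨hnorm, hfeas, hval⟩ := sqrtLasso_dual_certificate (by positivity) hmin hr hsn.le ha
  refine ⟨?_, fun j => ?_, ?_⟩
  · rw [← dotProduct_self_eq_sum_sq, hnorm, Real.sqrt_sq hsn.le]
  · exact div_le_div_of_nonneg_right ((hfeas j).trans_eq (mul_div_cancel₀ lam hsn.ne'))
      n.cast_nonneg
  · rw [hrss]
    change (n : ℝ)⁻¹ * (y ⬝ᵥ ahat) = _
    rw [hval]
    field_simp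
    linear_combination
      √((y - x *ᵥ βh) ⬝ᵥ (y - x *ᵥ βh)) * Real.mul_self_sqrt (n.cast_nonneg (α := ℝ))
end

section
/- Characterization of the zero solution: suppose (1/n)Σᵢ yᵢ² > 0. Then β = 0 is a minimizer of β ↦ √((1/n)Σᵢ (yᵢ − xᵢ'β)²) + (λ/n)‖β‖₁ if and only if n·max_{1≤j≤p} |(1/n)Σᵢ x_{ij}yᵢ| ≤ λ·√((1/n)Σᵢ yᵢ²). (Subgradient argument from Section 2.1 of the paper.) -/
/-!
Write `Q = (1/n) Σᵢ yᵢ²` and `cⱼ = (1/n) Σᵢ xᵢⱼ yᵢ`. If `n |cⱼ| > λ √Q` for some `j`, moving `β`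
from `0` along `± eⱼ` lowers the root-mean-square residual at rate `|cⱼ| / √Q` while the
penalty grows only at rate `λ / n`, so `0` is not a minimizer. Conversely, by Cauchy–Schwarz
`Q - Σⱼ cⱼ βⱼ = (1/n) Σᵢ yᵢ (yᵢ - xᵢ'β) ≤ √Q · √(mean squared residual at β)`, and the bound on
the `cⱼ` controls `Σⱼ cⱼ βⱼ` by `√Q · (λ / n) ‖β‖₁`; together these give `f 0 ≤ f β`.
-/

open Finset

theorem HasDerivAt.nonneg_of_isMinOn_Ici {φ : ℝ → ℝ} {d a : ℝ} (hφ : HasDerivAt φ d a)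
    (hmin : IsMinOn φ (Set.Ici a) a) : 0 ≤ d := by
  have hone : (1 : ℝ) ∈ posTangentConeAt (Set.Ici a) a :=
    mem_posTangentConeAt_of_segment_subset <|
      (segment_subset_Icc (by simp)).trans Set.Icc_subset_Ici_self
  simpa using hmin.localize.hasFDerivWithinAt_nonneg hφ.hasDerivWithinAt.hasFDerivWithinAt hone

section

variable {ι κ : Type*} [Fintype ι] [Fintype κ]

theorem mul_sum_mul_le_sqrt_mul_sqrt {c : ℝ} (hc : 0 ≤ c) (a b : ι → ℝ) :
    c * ∑ i, a i * b i ≤ √(c * ∑ i, a i ^ 2) * √(c * ∑ i, b i ^ 2) := by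
  rw [Real.sqrt_mul hc, Real.sqrt_mul hc, mul_mul_mul_comm, Real.mul_self_sqrt hc]
  exact mul_le_mul_of_nonneg_left (Real.sum_mul_le_sqrt_mul_sqrt _ _ _) hc

theorem hasDerivAt_sqrt_mul_sum_sub_mul_sq (c : ℝ) (y v : ι → ℝ) (hQ : c * ∑ i, y i ^ 2 ≠ 0) :
    HasDerivAt (fun t => √(c * ∑ i, (y i - t * v i) ^ 2))
      (-(c * ∑ i, y i * v i) / √(c * ∑ i, y i ^ 2)) 0 := by
  have hterm : ∀ i ∈ (univ : Finset ι),
      HasDerivAt (fun t => (y i - t * v i) ^ 2) (-(2 * y i * v i)) 0 := fun i _ => by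
    simpa using (((hasDerivAt_id (0 : ℝ)).mul_const (v i)).const_sub (y i)).fun_pow 2
  have hsum := ((HasDerivAt.fun_sum hterm).const_mul c).sqrt (by simpa using hQ)
  convert hsum using 1
  simp only [sum_neg_distrib, mul_assoc, ← mul_sum, zero_mul, sub_zero]
  field_simp

variable (x : ι → κ → ℝ) (y : ι → ℝ) (lam : ℝ)

noncomputable def sqrtLasso (β : κ → ℝ) : ℝ :=
  √((Fintype.card ι : ℝ)⁻¹ * ∑ i, (y i - ∑ j, x i j * β j) ^ 2) +
    lam / Fintype.card ι * ∑ j, |β j|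

theorem sqrtLasso_zero :
    sqrtLasso x y lam 0 = √((Fintype.card ι : ℝ)⁻¹ * ∑ i, y i ^ 2) := by
  simp [sqrtLasso]

theorem sqrtLasso_single [DecidableEq κ] (j : κ) {t : ℝ} (ht : 0 ≤ t) {s : ℝ} (hs : |s| = 1) :
    sqrtLasso x y lam (Pi.single j (t * s)) =
      √((Fintype.card ι : ℝ)⁻¹ * ∑ i, (y i - t * (x i j * s)) ^ 2) +
        lam / Fintype.card ι * t := by
  simp only [sqrtLasso, Pi.single_apply, mul_zero, sum_ite_eq', mem_univ, if_true,
    apply_ite, abs_zero, abs_mul, hs, abs_of_nonneg ht, mul_one]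
  congr 4 with i
  ring

theorem mean_mul_sub_sum_mul (β : κ → ℝ) :
    (Fintype.card ι : ℝ)⁻¹ * ∑ i, y i * (y i - ∑ j, x i j * β j) =
      (Fintype.card ι : ℝ)⁻¹ * ∑ i, y i ^ 2 -
        ∑ j, (Fintype.card ι : ℝ)⁻¹ * (∑ i, x i j * y i) * β j := by
  simp only [mul_sub, sum_sub_distrib, mul_sum, sum_mul]
  rw [sum_comm]
  congr 1
  · simp only [sq]
  · refine sum_congr rfl fun j _ => sum_congr rfl fun i _ => by ring

theorem sqrtLasso_zero_le (hQ : 0 < (Fintype.card ι : ℝ)⁻¹ * ∑ i, y i ^ 2)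
    (hcorr : ∀ j, (Fintype.card ι : ℝ) * |(Fintype.card ι : ℝ)⁻¹ * ∑ i, x i j * y i| ≤
      lam * √((Fintype.card ι : ℝ)⁻¹ * ∑ i, y i ^ 2)) (β : κ → ℝ) :
    sqrtLasso x y lam 0 ≤ sqrtLasso x y lam β := by
  set N : ℝ := (Fintype.card ι : ℝ)
  set Q := N⁻¹ * ∑ i, y i ^ 2
  set R := N⁻¹ * ∑ i, (y i - ∑ j, x i j * β j) ^ 2
  set c : κ → ℝ := fun j => N⁻¹ * ∑ i, x i j * y i
  have hN : 0 < N := inv_pos.mp (pos_of_mul_pos_left hQ (by positivity))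
  have hsQ : 0 < √Q := Real.sqrt_pos.mpr hQ
  have hcs : Q - ∑ j, c j * β j ≤ √Q * √R := by
    rw [← mean_mul_sub_sum_mul]
    exact mul_sum_mul_le_sqrt_mul_sqrt (by positivity) _ _
  have hpen : ∑ j, c j * β j ≤ √Q * (lam / N * ∑ j, |β j|) := by
    rw [mul_sum, mul_sum]
    refine sum_le_sum fun j _ => ?_
    calc c j * β j ≤ |c j| * |β j| := (le_abs_self _).trans (abs_mul _ _).le
      _ ≤ lam * √Q / N * |β j| := by
          gcongr
          rw [le_div_iff₀ hN, mul_comm]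
          exact hcorr j
      _ = √Q * (lam / N * |β j|) := by ring
  rw [sqrtLasso_zero]
  refine le_of_mul_le_mul_left ?_ hsQ
  calc √Q * √Q = Q := Real.mul_self_sqrt hQ.le
    _ ≤ √Q * √R + √Q * (lam / N * ∑ j, |β j|) := by linarith
    _ = √Q * (√R + lam / N * ∑ j, |β j|) := (mul_add _ _ _).symm

theorem mul_abs_corr_le_of_sqrtLasso_zero_le [DecidableEq κ]
    (hQ : 0 < (Fintype.card ι : ℝ)⁻¹ * ∑ i, y i ^ 2)
    (hmin : ∀ β, sqrtLasso x y lam 0 ≤ sqrtLasso x y lam β) (j : κ) :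
    (Fintype.card ι : ℝ) * |(Fintype.card ι : ℝ)⁻¹ * ∑ i, x i j * y i| ≤
      lam * √((Fintype.card ι : ℝ)⁻¹ * ∑ i, y i ^ 2) := by
  set N : ℝ := (Fintype.card ι : ℝ)
  set Q := N⁻¹ * ∑ i, y i ^ 2
  set c := N⁻¹ * ∑ i, x i j * y i
  have hN : 0 < N := inv_pos.mp (pos_of_mul_pos_left hQ (by positivity))
  have hsQ : 0 < √Q := Real.sqrt_pos.mpr hQ
  obtain ⟨s, hs, hsc⟩ : ∃ s : ℝ, |s| = 1 ∧ N⁻¹ * ∑ i, y i * (x i j * s) = |c| := by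
    refine ⟨if 0 ≤ c then 1 else -1, by split_ifs <;> simp, ?_⟩
    simp_rw [← mul_assoc, ← sum_mul, mul_comm (y _), ← mul_assoc]
    split_ifs with h
    · rw [mul_one, abs_of_nonneg h]
    · rw [abs_of_neg (not_le.mp h), mul_neg_one]
  have hmin' : IsMinOn (fun t => √(N⁻¹ * ∑ i, (y i - t * (x i j * s)) ^ 2) + lam / N * t)
      (Set.Ici 0) 0 := isMinOn_iff.mpr fun t (ht : 0 ≤ t) => by
    have h0 := sqrtLasso_single x y lam j le_rfl hs
    have hle := hmin (Pi.single j (t * s))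
    rw [zero_mul, Pi.single_zero] at h0
    rwa [h0, sqrtLasso_single x y lam j ht hs] at hle
  have hslope := (((hasDerivAt_sqrt_mul_sum_sub_mul_sq N⁻¹ y (fun i => x i j * s) hQ.ne').fun_add
    ((hasDerivAt_id' 0).const_mul (lam / N))).nonneg_of_isMinOn_Ici hmin')
  rw [hsc, mul_one, neg_div, le_neg_add_iff_add_le, add_zero, div_le_div_iff₀ hsQ hN] at hslope
  linarith

theorem sqrtLasso_zero_le_iff [DecidableEq κ] (hQ : 0 < (Fintype.card ι : ℝ)⁻¹ * ∑ i, y i ^ 2) :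
    (∀ β, sqrtLasso x y lam 0 ≤ sqrtLasso x y lam β) ↔
      ∀ j, (Fintype.card ι : ℝ) * |(Fintype.card ι : ℝ)⁻¹ * ∑ i, x i j * y i| ≤
        lam * √((Fintype.card ι : ℝ)⁻¹ * ∑ i, y i ^ 2) :=
  ⟨mul_abs_corr_le_of_sqrtLasso_zero_le x y lam hQ, sqrtLasso_zero_le x y lam hQ⟩

end

theorem sqrt_lasso_zero_solution_iff_general
    (n p : ℕ) (hp : 0 < p)
    (x : Fin n → Fin p → ℝ) (y : Fin n → ℝ)
    (lam : ℝ)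
    (f : (Fin p → ℝ) → ℝ)
    (hf : ∀ β, f β = Real.sqrt ((n : ℝ)⁻¹ * ∑ i, (y i - ∑ j, x i j * β j) ^ 2) +
      (lam / n) * ∑ j, |β j|)
    (hy2 : 0 < (n : ℝ)⁻¹ * ∑ i, (y i) ^ 2) :
    (∀ β : Fin p → ℝ, f 0 ≤ f β) ↔
      (n : ℝ) * Finset.univ.sup' ⟨⟨0, hp⟩, Finset.mem_univ _⟩
          (fun j => |(n : ℝ)⁻¹ * ∑ i, x i j * y i|) ≤
        lam * Real.sqrt ((n : ℝ)⁻¹ * ∑ i, (y i) ^ 2) := by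
  have hf' : f = sqrtLasso x y lam := funext fun β => by rw [hf, sqrtLasso, Fintype.card_fin]
  have key := sqrtLasso_zero_le_iff x y lam (by rwa [Fintype.card_fin])
  simp only [Fintype.card_fin] at key
  rw [hf', key]
  exact ⟨fun h => (mul₀_sup' n.cast_nonneg _ _ _).trans_le (sup'_le _ _ fun j _ => h j),
    fun h j => (mul_le_mul_of_nonneg_left (le_sup' _ (mem_univ j)) n.cast_nonneg).trans h⟩

/-- Characterization of the zero solution (subgradient argument from Section 2.1):
assuming `(1/n)Σᵢ yᵢ² > 0`, `β = 0` minimizes the square-root lasso objective if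
and only if `n max_j |(1/n)Σᵢ x_{ij} yᵢ| ≤ λ √((1/n)Σᵢ yᵢ²)`. -/
theorem sqrt_lasso_zero_solution_iff
    (n p : ℕ) (hn : 0 < n) (hp : 0 < p)
    (x : Fin n → Fin p → ℝ) (y : Fin n → ℝ)
    (lam : ℝ) (hlam : 0 < lam)
    (f : (Fin p → ℝ) → ℝ)
    (hf : ∀ β, f β = Real.sqrt ((n : ℝ)⁻¹ * ∑ i, (y i - ∑ j, x i j * β j) ^ 2) +
      (lam / n) * ∑ j, |β j|)
    (hy2 : 0 < (n : ℝ)⁻¹ * ∑ i, (y i) ^ 2) :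
    (∀ β : Fin p → ℝ, f 0 ≤ f β) ↔
      (n : ℝ) * Finset.univ.sup' ⟨⟨0, hp⟩, Finset.mem_univ _⟩
          (fun j => |(n : ℝ)⁻¹ * ∑ i, x i j * y i|) ≤
        lam * Real.sqrt ((n : ℝ)⁻¹ * ∑ i, (y i) ^ 2) :=
  sqrt_lasso_zero_solution_iff_general n p hp x y lam f hf hy2
end

section
/- Componentwise optimality (zero case) for the square-root lasso: fix j ∈ {1,…,p}, a weight γⱼ > 0, and a vector β_{−j} ∈ ℝᵖ whose j-th coordinate is zero, and suppose Q̂(β_{−j}) > 0. If |(1/n)Σᵢ x_{ij}(yᵢ − xᵢ'β_{−j})| ≤ (λ/n)·γⱼ·√(Q̂(β_{−j})), then b = 0 minimizes the univariate function b ↦ √(Q̂(β_{−j} + b·eⱼ)) + (λγⱼ/n)·|b|, where eⱼ is the j-th standard basis vector. (Componentwise search rule for the square-root lasso, Supplementary Material.) -/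
/-!
Scale the residual `r` at `β_{-j}` and the `j`-th design column `v` by `√(1/n)`, so that
`√Q̂` becomes a Euclidean norm and the score `(1/n)Σᵢ x_{ij}(yᵢ - xᵢ'β_{-j})` becomes `⟪v, r⟫`.
By Cauchy–Schwarz, `‖r‖² = ⟪r - b v, r⟫ + b ⟪v, r⟫ ≤ ‖r - b v‖ ‖r‖ + |b| |⟪v, r⟫|`, and the
hypothesis `|⟪v, r⟫| ≤ (λγⱼ/n) ‖r‖` followed by division by `‖r‖ > 0` gives
`‖r‖ ≤ ‖r - b v‖ + (λγⱼ/n) |b|`.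
-/

open Finset

open scoped RealInnerProductSpace

theorem norm_le_norm_sub_smul_add_of_abs_inner_le {E : Type*} [NormedAddCommGroup E]
    [InnerProductSpace ℝ E] {r v : E} {c : ℝ} (hr : r ≠ 0) (h : |⟪v, r⟫| ≤ c * ‖r‖) (b : ℝ) :
    ‖r‖ ≤ ‖r - b • v‖ + c * |b| := by
  refine le_of_mul_le_mul_right ?_ (norm_pos_iff.mpr hr)
  have hbv : b * ⟪v, r⟫ ≤ |b| * (c * ‖r‖) :=
    calc b * ⟪v, r⟫ ≤ |b| * |⟪v, r⟫| := (le_abs_self _).trans_eq (abs_mul _ _)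
      _ ≤ |b| * (c * ‖r‖) := by gcongr
  calc ‖r‖ * ‖r‖ = ⟪r - b • v, r⟫ + b * ⟪v, r⟫ := by
        rw [inner_sub_left, real_inner_smul_left, real_inner_self_eq_norm_mul_norm]; ring
    _ ≤ ‖r - b • v‖ * ‖r‖ + |b| * (c * ‖r‖) := add_le_add (real_inner_le_norm _ _) hbv
    _ = (‖r - b • v‖ + c * |b|) * ‖r‖ := by ring

noncomputable def scaledResidual {n p : ℕ} (x : Fin n → Fin p → ℝ) (y : Fin n → ℝ)
    (β : Fin p → ℝ) : EuclideanSpace ℝ (Fin n) :=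
  WithLp.toLp 2 fun i => √(n : ℝ)⁻¹ * (y i - ∑ k, x i k * β k)

noncomputable def scaledColumn {n p : ℕ} (x : Fin n → Fin p → ℝ) (j : Fin p) :
    EuclideanSpace ℝ (Fin n) :=
  WithLp.toLp 2 fun i => √(n : ℝ)⁻¹ * x i j

section

variable {n p : ℕ} (x : Fin n → Fin p → ℝ) (y : Fin n → ℝ)

theorem norm_scaledResidual_sq (β : Fin p → ℝ) :
    ‖scaledResidual x y β‖ ^ 2 = (n : ℝ)⁻¹ * ∑ i, (y i - ∑ k, x i k * β k) ^ 2 := by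
  simp [scaledResidual, EuclideanSpace.norm_sq_eq, mul_pow, mul_sum]

theorem inner_scaledColumn_scaledResidual (j : Fin p) (β : Fin p → ℝ) :
    ⟪scaledColumn x j, scaledResidual x y β⟫ =
      (n : ℝ)⁻¹ * ∑ i, x i j * (y i - ∑ k, x i k * β k) := by
  have hs : (√(n : ℝ))⁻¹ * (√(n : ℝ))⁻¹ = (n : ℝ)⁻¹ := by
    rw [← mul_inv, Real.mul_self_sqrt n.cast_nonneg]
  simp only [scaledColumn, scaledResidual, PiLp.inner_apply, mul_sum, Real.sqrt_inv,
    Real.inner_apply]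
  refine Finset.sum_congr rfl fun i _ => ?_
  linear_combination (x i j * (y i - ∑ k, x i k * β k)) * hs

theorem scaledResidual_add_single (β : Fin p → ℝ) (j : Fin p) (b : ℝ) :
    scaledResidual x y (fun k => β k + if k = j then b else 0) =
      scaledResidual x y β - b • scaledColumn x j := by
  ext i
  simp only [scaledResidual, scaledColumn, PiLp.sub_apply, PiLp.smul_apply, smul_eq_mul, mul_add,
    mul_ite, mul_zero, sum_add_distrib, sum_ite_eq', mem_univ, ↓reduceIte]
  ring

end

theorem sqrt_lasso_componentwise_zero_general
    (n p : ℕ)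
    (x : Fin n → Fin p → ℝ) (y : Fin n → ℝ)
    (lam : ℝ)
    (Q : (Fin p → ℝ) → ℝ)
    (hQ : ∀ β, Q β = (n : ℝ)⁻¹ * ∑ i, (y i - ∑ j, x i j * β j) ^ 2)
    (j : Fin p) (γ : ℝ)
    (βmj : Fin p → ℝ)
    (hQpos : 0 < Q βmj)
    (hcond : |(n : ℝ)⁻¹ * ∑ i, x i j * (y i - ∑ k, x i k * βmj k)| ≤
      (lam / n) * γ * Real.sqrt (Q βmj)) :
    ∀ b : ℝ,
      Real.sqrt (Q βmj) + (lam * γ / n) * |(0 : ℝ)| ≤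
        Real.sqrt (Q (fun k => βmj k + if k = j then b else 0)) +
          (lam * γ / n) * |b| := by
  intro b
  have hnorm : ∀ β, √(Q β) = ‖scaledResidual x y β‖ := fun β => by
    rw [hQ, ← norm_scaledResidual_sq, Real.sqrt_sq (norm_nonneg _)]
  have hr : scaledResidual x y βmj ≠ 0 :=
    norm_pos_iff.mp (hnorm βmj ▸ Real.sqrt_pos.mpr hQpos)
  have hscore : |⟪scaledColumn x j, scaledResidual x y βmj⟫| ≤
      lam * γ / n * ‖scaledResidual x y βmj‖ := by
    rw [inner_scaledColumn_scaledResidual, ← hnorm]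
    convert hcond using 1
    ring
  rw [abs_zero, mul_zero, add_zero, hnorm, hnorm, scaledResidual_add_single]
  exact norm_le_norm_sub_smul_add_of_abs_inner_le hr hscore b

/-- Componentwise optimality (zero case) for the weighted square-root lasso
(componentwise search rule, Supplementary Material): if
`|(1/n)Σᵢ x_{ij}(yᵢ - xᵢ'β_{-j})| ≤ (λ/n) γⱼ √Q̂(β_{-j})`, then `b = 0` minimizes
`b ↦ √Q̂(β_{-j} + b eⱼ) + (λγⱼ/n)|b|`. -/
theorem sqrt_lasso_componentwise_zero
    (n p : ℕ) (hn : 0 < n)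
    (x : Fin n → Fin p → ℝ) (y : Fin n → ℝ)
    (lam : ℝ) (hlam : 0 < lam)
    (Q : (Fin p → ℝ) → ℝ)
    (hQ : ∀ β, Q β = (n : ℝ)⁻¹ * ∑ i, (y i - ∑ j, x i j * β j) ^ 2)
    (j : Fin p) (γ : ℝ) (hγ : 0 < γ)
    (βmj : Fin p → ℝ) (hβmj : βmj j = 0)
    (hQpos : 0 < Q βmj)
    (hcond : |(n : ℝ)⁻¹ * ∑ i, x i j * (y i - ∑ k, x i k * βmj k)| ≤
      (lam / n) * γ * Real.sqrt (Q βmj)) :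
    ∀ b : ℝ,
      Real.sqrt (Q βmj) + (lam * γ / n) * |(0 : ℝ)| ≤
        Real.sqrt (Q (fun k => βmj k + if k = j then b else 0)) +
          (lam * γ / n) * |b| :=
  sqrt_lasso_componentwise_zero_general n p x y lam Q hQ j γ βmj hQpos hcond
end
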